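/- arXiv:1512.09033 — 8 statements merged into one kernel-verified Lean document; each statement's English description precedes it below -/
import Mathlib

section
/- Let (u_n)_{n≥1} be a sequence of positive integers tending to infinity with n, let k be a positive integer, and let t be a nonzero integer. Then the series ∑_{n=1}^∞ (-1)^{u_n} · F_{u_{n+k} - u_n} / (F_{u_n} · F_{u_{n+k}}) converges and equals (1/F_t) · ( ∑_{n=1}^{k} F_{u_n + t}/F_{u_n} − k·Φ^t ). -/
open Filter Finset Topology

/-- The golden ratio `Φ = (1 + √5)/2`. -/
noncomputable def Phi : ℝ := (1 + Real.sqrt 5) / 2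

/-- The Fibonacci sequence extended to all integer indices via
`F_{-n} = (-1)^(n+1) F_n`. -/
def fibZ (n : ℤ) : ℤ :=
  if 0 ≤ n then (Nat.fib n.toNat : ℤ) else (-1) ^ (n.natAbs + 1) * (Nat.fib n.natAbs : ℤ)

/-!
Vajda's identity `F (a + t) F b - F a F (b + t) = (-1) ^ a F t F (b - a)` turns the `n`-th term
into `(G n - G (n + k)) / F t` with `G n = F (u n + t) / F (u n)`, so the partial sums telescope
to `(∑_{n ≤ k} G n - ∑_{n < k} G (N + n)) / F t`. Finally `G n → Φ ^ t`, because
`F (m + t) = Φ ^ t F m + ψ ^ m F t` with `|ψ| < 1`.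
-/

open Real goldenRatio

theorem fibZ_eq_intFib : fibZ = Int.fib := by
  funext n
  obtain ⟨m, rfl | rfl⟩ := n.eq_nat_or_neg
  · simp [fibZ]
  · simp [fibZ, Int.fib_neg_natCast]

theorem Phi_eq_goldenRatio : Phi = φ := rfl

theorem coe_intFib_add (m t : ℤ) :
    (Int.fib (m + t) : ℝ) = φ ^ t * Int.fib m + ψ ^ m * Int.fib t := by
  simp only [coe_intFib_eq, zpow_add₀ goldenRatio_ne_zero, zpow_add₀ goldenConj_ne_zero]
  ring

/-- **Vajda's identity**. -/
theorem coe_intFib_add_mul_sub_mul_add (a b t : ℤ) :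
    (Int.fib (a + t) * Int.fib b - Int.fib a * Int.fib (b + t) : ℝ) =
      (-1) ^ a * Int.fib t * Int.fib (b - a) := by
  have hφ := goldenRatio_ne_zero
  have hψ := goldenConj_ne_zero
  rw [← goldenRatio_mul_goldenConj]
  simp only [coe_intFib_eq, zpow_add₀ hφ, zpow_add₀ hψ, zpow_sub₀ hφ, zpow_sub₀ hψ, mul_zpow]
  field_simp
  ring

theorem neg_one_pow_mul_intFib_sub_div_eq {a b : ℕ} (ha : a ≠ 0) (hb : b ≠ 0) {t : ℤ}
    (ht : t ≠ 0) :
    (-1 : ℝ) ^ a * (Int.fib ((b : ℤ) - a) / (Nat.fib a * Nat.fib b)) =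
      1 / Int.fib t * (Int.fib (a + t) / Nat.fib a - Int.fib (b + t) / Nat.fib b) := by
  have hvajda := coe_intFib_add_mul_sub_mul_add a b t
  rw [Int.fib_natCast, Int.fib_natCast, zpow_natCast] at hvajda
  have hFt : (Int.fib t : ℝ) ≠ 0 := by exact_mod_cast Int.fib_eq_zero.not.2 ht
  have hFa : (Nat.fib a : ℝ) ≠ 0 := by exact_mod_cast Nat.fib_eq_zero.not.2 ha
  have hFb : (Nat.fib b : ℝ) ≠ 0 := by exact_mod_cast Nat.fib_eq_zero.not.2 hb
  field_simp
  linear_combination -hvajda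

theorem Finset.sum_range_sub_shift {M : Type*} [AddCommGroup M] (f : ℕ → M) (k N : ℕ) :
    ∑ n ∈ range N, (f n - f (n + k)) = ∑ n ∈ range k, f n - ∑ n ∈ range k, f (N + n) := by
  have h₁ := Finset.sum_range_add f N k
  have h₂ := Finset.sum_range_add f k N
  rw [Nat.add_comm k N, h₁] at h₂
  simp only [Finset.sum_sub_distrib, Nat.add_comm _ k]
  rw [eq_sub_iff_add_eq, sub_add_eq_add_sub, h₂]
  abel

theorem tendsto_sum_range_sub_shift {M : Type*} [AddCommGroup M] [TopologicalSpace M]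
    [IsTopologicalAddGroup M] {f : ℕ → M} {L : M} (hf : Tendsto f atTop (𝓝 L)) (k : ℕ) :
    Tendsto (fun N => ∑ n ∈ range N, (f n - f (n + k))) atTop
      (𝓝 (∑ n ∈ range k, f n - k • L)) := by
  simp_rw [Finset.sum_range_sub_shift]
  refine tendsto_const_nhds.sub ?_
  simpa using tendsto_finsetSum (range k) fun n _ => hf.comp (tendsto_add_atTop_nat n)

theorem Nat.tendsto_fib_atTop : Tendsto Nat.fib atTop atTop :=
  (tendsto_add_atTop_iff_nat 2).1 Nat.fib_add_two_strictMono.tendsto_atTop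

theorem tendsto_intFib_add_div_fib (t : ℤ) :
    Tendsto (fun m : ℕ => (Int.fib (m + t) : ℝ) / Nat.fib m) atTop (𝓝 (φ ^ t)) := by
  have hψ : Tendsto (fun m : ℕ => ψ ^ m) atTop (𝓝 0) :=
    tendsto_pow_atTop_nhds_zero_of_abs_lt_one
      (abs_lt.2 ⟨neg_one_lt_goldenConj, goldenConj_neg.trans one_pos⟩)
  have hinv : Tendsto (fun m : ℕ => (Nat.fib m : ℝ)⁻¹) atTop (𝓝 0) :=
    tendsto_inv_atTop_zero.comp (tendsto_natCast_atTop_atTop.comp Nat.tendsto_fib_atTop)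
  have hlim := tendsto_const_nhds (x := φ ^ t) |>.add ((hψ.mul hinv).mul_const (Int.fib t : ℝ))
  rw [mul_zero, zero_mul, add_zero] at hlim
  refine hlim.congr' ?_
  filter_upwards [eventually_ge_atTop 1] with m hm
  have hfib : (Nat.fib m : ℝ) ≠ 0 := by positivity [Nat.fib_pos.2 hm]
  rw [coe_intFib_add, Int.fib_natCast, zpow_natCast]
  field_simp
  push_cast
  ring

theorem statement0_general (u : ℕ → ℕ) (hupos : ∀ n, 1 ≤ n → 1 ≤ u n)
    (hutend : Tendsto u atTop atTop) (k : ℕ) (t : ℤ) (ht : t ≠ 0) :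
    Tendsto (fun N => ∑ n ∈ Finset.range N,
        (-1 : ℝ) ^ (u (n + 1)) *
          ((fibZ ((u (n + k + 1) : ℤ) - (u (n + 1) : ℤ)) : ℝ) /
            ((Nat.fib (u (n + 1)) : ℝ) * (Nat.fib (u (n + k + 1)) : ℝ))))
      atTop
      (𝓝 ((1 / (fibZ t : ℝ)) *
        ((∑ n ∈ Finset.range k,
            (fibZ ((u (n + 1) : ℤ) + t) : ℝ) / (Nat.fib (u (n + 1)) : ℝ)) -
          (k : ℝ) * Phi ^ t))) := by
  simp only [fibZ_eq_intFib, Phi_eq_goldenRatio]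
  set F : ℕ → ℝ := fun n => Int.fib (u (n + 1) + t) / Nat.fib (u (n + 1))
  have hu : ∀ n, u (n + 1) ≠ 0 := fun n => Nat.one_le_iff_ne_zero.1 (hupos _ n.succ_pos)
  have hF : Tendsto F atTop (𝓝 (φ ^ t)) :=
    (tendsto_intFib_add_div_fib t).comp (hutend.comp (tendsto_add_atTop_nat 1))
  simp_rw [neg_one_pow_mul_intFib_sub_div_eq (hu _) (hu _) ht, ← Finset.mul_sum, ← nsmul_eq_mul]
  exact (tendsto_sum_range_sub_shift hF k).const_mul _

/-- Let `(u_n)_{n≥1}` be a sequence of positive integers tending to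
infinity, `k ≥ 1` and `t ∈ ℤ*`. Then
`∑_{n=1}^∞ (-1)^{u_n} F_{u_{n+k} - u_n} / (F_{u_n} F_{u_{n+k}})`
converges and equals `(1/F_t) (∑_{n=1}^k F_{u_n + t}/F_{u_n} - k Φ^t)`. -/
theorem statement0 (u : ℕ → ℕ) (hupos : ∀ n, 1 ≤ n → 1 ≤ u n)
    (hutend : Tendsto u atTop atTop) (k : ℕ) (hk : 1 ≤ k) (t : ℤ) (ht : t ≠ 0) :
    Tendsto (fun N => ∑ n ∈ Finset.range N,
        (-1 : ℝ) ^ (u (n + 1)) *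
          ((fibZ ((u (n + k + 1) : ℤ) - (u (n + 1) : ℤ)) : ℝ) /
            ((Nat.fib (u (n + 1)) : ℝ) * (Nat.fib (u (n + k + 1)) : ℝ))))
      atTop
      (𝓝 ((1 / (fibZ t : ℝ)) *
        ((∑ n ∈ Finset.range k,
            (fibZ ((u (n + 1) : ℤ) + t) : ℝ) / (Nat.fib (u (n + 1)) : ℝ)) -
          (k : ℝ) * Phi ^ t))) :=
  statement0_general u hupos hutend k t ht
end

section
/- Let (u_n)_{n≥1} be an increasing arithmetic sequence of positive integers with common difference r ≥ 1. Then for any positive integer k: ∑_{n=1}^∞ (-1)^{r(n-1)} / (F_{u_n} · F_{u_{n+k}}) = ((-1)^{u_1} / F_{kr}) · ( ∑_{n=1}^{k} F_{u_n + 1}/F_{u_n} − k·Φ ). -/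
open Filter Finset Topology

/-!
Write `u_n = a + (n - 1) r` and `g_n = F_{u_n + 1} / F_{u_n}`. By d'Ocagne's identity
`F_{a+c} F_{a+1} - F_{a+c+1} F_a = (-1)^a F_c`, applied with `c = kr = u_{n+k} - u_n`, the `n`-th
term of the series equals `(-1)^{u_1} / F_{kr} · (g_n - g_{n+k})`. The series therefore telescopes
with shift `k`: its `N`-th partial sum is `(-1)^{u_1} / F_{kr}` times
`∑_{n=1}^k g_n - ∑_{n=1}^k g_{N+n}`, and the second sum tends to `k Φ` because
`F_{m+1} / F_m → Φ`. The series converges absolutely by comparison with `∑ 1 / F_m`, which passes the ratio test.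
-/

open Nat (fib)
open Real goldenRatio

theorem fib_add_mul_fib_succ_sub_fib_add_succ_mul_fib {R : Type*} [CommRing R] (a c : ℕ) :
    (fib (a + c) * fib (a + 1) : R) - fib (a + c + 1) * fib a = (-1) ^ a * fib c := by
  induction a with
  | zero => simp
  | succ a ih =>
    rw [show a + 1 + c = a + c + 1 by omega, Nat.fib_add_two,
      show a + c + 1 + 1 = a + c + 2 by omega, Nat.fib_add_two]
    push_cast
    linear_combination -ih

theorem fib_succ_div_fib_sub_fib_add_succ_div_fib_add {K : Type*} [Field K] [CharZero K]
    {a : ℕ} (ha : 1 ≤ a) (c : ℕ) :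
    (fib (a + 1) : K) / fib a - fib (a + c + 1) / fib (a + c) =
      (-1) ^ a * fib c / (fib a * fib (a + c)) := by
  have hfa : (fib a : K) ≠ 0 := by exact_mod_cast (Nat.fib_pos.2 ha).ne'
  have hfac : (fib (a + c) : K) ≠ 0 := by exact_mod_cast (Nat.fib_pos.2 (by omega)).ne'
  rw [div_sub_div _ _ hfa hfac, ← fib_add_mul_fib_succ_sub_fib_add_succ_mul_fib]
  ring

theorem summable_one_div_fib : Summable fun n ↦ 1 / (fib n : ℝ) := by
  refine summable_of_ratio_test_tendsto_lt_one (l := -ψ) (by linarith [neg_one_lt_goldenConj])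
    ?_ ?_
  · filter_upwards [eventually_ge_atTop 1] with n hn
    simpa using (Nat.fib_pos.2 hn).ne'
  · refine tendsto_fib_div_fib_succ_atTop.congr fun n ↦ ?_
    simp [div_eq_mul_inv, mul_comm]

theorem Finset.sum_range_sub_comp_add {M : Type*} [AddCommGroup M] (f : ℕ → M) (k N : ℕ) :
    ∑ n ∈ range N, (f n - f (n + k)) =
      ∑ i ∈ range k, f i - ∑ i ∈ range k, f (N + i) := by
  have h₁ := sum_range_add f N k
  have h₂ := sum_range_add f k N
  rw [add_comm k N, h₁] at h₂
  simp only [add_comm k] at h₂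
  rw [sum_sub_distrib, sub_eq_sub_iff_add_eq_add, h₂]

theorem tendsto_sum_range_sub_comp_add {M : Type*} [AddCommGroup M] [TopologicalSpace M]
    [IsTopologicalAddGroup M] {f : ℕ → M} {L : M} (hf : Tendsto f atTop (𝓝 L)) (k : ℕ) :
    Tendsto (fun N ↦ ∑ n ∈ range N, (f n - f (n + k))) atTop
      (𝓝 (∑ i ∈ range k, f i - k • L)) := by
  simp_rw [sum_range_sub_comp_add]
  rw [show k • L = ∑ _i ∈ range k, L by simp]
  exact tendsto_const_nhds.sub (tendsto_finsetSum _ fun i _ ↦ hf.comp (tendsto_add_atTop_nat i))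

theorem summable_neg_one_pow_div_fib_mul_fib {a r k : ℕ} (ha : 1 ≤ a) (hr : 1 ≤ r) :
    Summable fun n : ℕ ↦ (-1 : ℝ) ^ (r * n) / (fib (a + n * r) * fib (a + (n + k) * r)) := by
  have hinj : Function.Injective fun n : ℕ ↦ a + n * r := fun m n h ↦
    Nat.eq_of_mul_eq_mul_right hr (by simpa using h)
  refine (summable_one_div_fib.comp_injective hinj).of_norm_bounded fun n ↦ ?_
  have h₀ : (0 : ℝ) < fib (a + n * r) := by exact_mod_cast Nat.fib_pos.2 (by omega)
  have h₁ : (1 : ℝ) ≤ fib (a + (n + k) * r) := by exact_mod_cast Nat.fib_pos.2 (by omega)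
  rw [norm_div, norm_pow, norm_neg, norm_one, one_pow, Real.norm_of_nonneg (by positivity)]
  exact one_div_le_one_div_of_le h₀ (le_mul_of_one_le_right h₀.le h₁)

theorem hasSum_neg_one_pow_div_fib_mul_fib {a r k : ℕ} (ha : 1 ≤ a) (hr : 1 ≤ r)
    (hk : 1 ≤ k) :
    HasSum (fun n : ℕ ↦ (-1 : ℝ) ^ (r * n) / (fib (a + n * r) * fib (a + (n + k) * r)))
      ((-1) ^ a / fib (k * r) *
        (∑ n ∈ range k, (fib (a + n * r + 1) : ℝ) / fib (a + n * r) - k * φ)) := by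
  set c : ℝ := (-1) ^ a / fib (k * r)
  set g : ℕ → ℝ := fun n ↦ (fib (a + n * r + 1) : ℝ) / fib (a + n * r)
  have hfkr : (fib (k * r) : ℝ) ≠ 0 := by
    exact_mod_cast (Nat.fib_pos.2 (Nat.mul_pos hk hr)).ne'
  have hterm : ∀ n : ℕ, (-1 : ℝ) ^ (r * n) / (fib (a + n * r) * fib (a + (n + k) * r)) =
      c * (g n - g (n + k)) := by
    intro n
    have hshift : a + (n + k) * r = a + n * r + k * r := by ring
    simp only [g, hshift,
      fib_succ_div_fib_sub_fib_add_succ_div_fib_add (a := a + n * r) (by omega)]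
    have hsign : (-1 : ℝ) ^ (r * n) = (-1) ^ a * (-1) ^ (a + n * r) := by
      rw [← pow_add, show a + (a + n * r) = 2 * a + r * n by ring, pow_add, pow_mul]
      simp
    rw [hsign]
    simp only [c]
    field_simp
  have hg : Tendsto g atTop (𝓝 φ) :=
    tendsto_fib_succ_div_fib_atTop.comp <|
      tendsto_atTop_mono (fun n ↦ show n ≤ a + n * r by nlinarith) tendsto_id
  have hsum := summable_neg_one_pow_div_fib_mul_fib (k := k) ha hr
  rw [funext hterm] at hsum ⊢
  refine hsum.hasSum_iff_tendsto_nat.2 ?_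
  simpa [← mul_sum, nsmul_eq_mul] using (tendsto_sum_range_sub_comp_add hg k).const_mul c

/-- Let `(u_n)_{n≥1}` be an increasing arithmetic sequence of positive
integers with common difference `r ≥ 1`. Then for any positive integer `k`:
`∑_{n=1}^∞ (-1)^{r(n-1)} / (F_{u_n} F_{u_{n+k}})
= ((-1)^{u_1} / F_{kr}) (∑_{n=1}^k F_{u_n + 1}/F_{u_n} - k Φ)`. -/
theorem statement3 (u : ℕ → ℕ) (r : ℕ) (hr : 1 ≤ r) (hu1 : 1 ≤ u 1)
    (harith : ∀ n, 1 ≤ n → u (n + 1) = u n + r) (k : ℕ) (hk : 1 ≤ k) :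
    ∑' n : ℕ, (-1 : ℝ) ^ (r * n) /
        ((Nat.fib (u (n + 1)) : ℝ) * (Nat.fib (u (n + 1 + k)) : ℝ)) =
      ((-1 : ℝ) ^ (u 1) / (Nat.fib (k * r) : ℝ)) *
        ((∑ n ∈ Finset.range k,
            (Nat.fib (u (n + 1) + 1) : ℝ) / (Nat.fib (u (n + 1)) : ℝ)) -
          (k : ℝ) * Phi) := by
  have hu : ∀ n, u (n + 1) = u 1 + n * r := by
    intro n
    induction n with
    | zero => simp
    | succ n ih => rw [harith (n + 1) (by omega), ih]; ring
  have hu' : ∀ n, u (n + 1 + k) = u 1 + (n + k) * r := fun n ↦ by rw [add_right_comm, hu]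
  -- Otherwise `simp` loops, reading `u 1` as `u (0 + 1)`.
  set a := u 1
  simp only [hu', hu]
  exact (hasSum_neg_one_pow_div_fib_mul_fib hu1 hr hk).tsum_eq
end

section
/- For any positive integer k: ∑_{n=1}^∞ L_{k·3^n} / F_{k·3^{n+1}} = 1 / (F_{3k} · Φ^{3k}). -/
open Filter Finset Topology
open scoped goldenRatio

/-- The Lucas sequence: `L_0 = 2`, `L_1 = 1`, `L_{n+2} = L_n + L_{n+1}`. -/
def lucas : ℕ → ℕ
  | 0 => 2
  | 1 => 1
  | n + 2 => lucas n + lucas (n + 1)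

/-!
By Binet's formulas `L_m / F_{3m} = 1 / (F_m Φ ^ m) - 1 / (F_{3m} Φ ^ {3m})` for `m ≥ 1`.
Taking `m = k 3 ^ n` the series telescopes, and its tail `1 / (F_m Φ ^ m) ≤ Φ ^ {-m}` tends
to zero.
-/

theorem coe_lucas_eq : ∀ n, (lucas n : ℝ) = φ ^ n + ψ ^ n
  | 0 => by norm_num [lucas]
  | 1 => by simp [lucas, Real.goldenRatio_add_goldenConj]
  | n + 2 => by
    have hφ : φ ^ (n + 2) = φ ^ n + φ ^ (n + 1) := by rw [pow_add, Real.goldenRatio_sq]; ring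
    have hψ : ψ ^ (n + 2) = ψ ^ n + ψ ^ (n + 1) := by rw [pow_add, Real.goldenConj_sq]; ring
    rw [lucas, Nat.cast_add, coe_lucas_eq n, coe_lucas_eq (n + 1), hφ, hψ]
    ring

-- With `a = φ ^ m`, `b = ψ ^ m` this is `(a + b) a³ = a² (a² + a b + b²) - 1`, true as `(a b)² = 1`.
theorem lucas_div_fib_three_mul {m : ℕ} (hm : m ≠ 0) :
    (lucas m : ℝ) / Nat.fib (3 * m) =
      1 / (Nat.fib m * φ ^ m) - 1 / (Nat.fib (3 * m) * φ ^ (3 * m)) := by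
  have hfib : (Nat.fib m : ℝ) ≠ 0 := by exact_mod_cast (Nat.fib_pos.mpr (by omega)).ne'
  have hfib3 : (Nat.fib (3 * m) : ℝ) ≠ 0 := by exact_mod_cast (Nat.fib_pos.mpr (by omega)).ne'
  have hφ : φ ^ m ≠ 0 := pow_ne_zero _ Real.goldenRatio_ne_zero
  have hφψ : (φ ^ m * ψ ^ m) ^ 2 = 1 := by
    rw [← mul_pow, Real.goldenRatio_mul_goldenConj, ← pow_mul, mul_comm, pow_mul]; norm_num
  field_simp
  rw [coe_lucas_eq, Real.coe_fib_eq m, Real.coe_fib_eq (3 * m), mul_comm 3 m, pow_mul, pow_mul]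
  generalize φ ^ m = a, ψ ^ m = b at *
  field_simp
  linear_combination (b - a) * hφψ

theorem tendsto_one_div_fib_mul_goldenRatio_pow :
    Tendsto (fun m : ℕ => 1 / ((Nat.fib m : ℝ) * φ ^ m)) atTop (𝓝 0) := by
  have hφ : Tendsto (fun m : ℕ => φ ^ m) atTop atTop :=
    tendsto_pow_atTop_atTop_of_one_lt Real.one_lt_goldenRatio
  refine (tendsto_atTop_mono' _ ?_ hφ).inv_tendsto_atTop.congr fun m => (one_div _).symm
  filter_upwards [eventually_ne_atTop 0] with m hm
  have : (1 : ℝ) ≤ Nat.fib m := by exact_mod_cast Nat.fib_pos.mpr (by omega)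
  exact le_mul_of_one_le_left (by positivity) this

theorem hasSum_sub_succ_of_nonneg {f : ℕ → ℝ} {l : ℝ} (hf : ∀ n, 0 ≤ f n - f (n + 1))
    (hl : Tendsto f atTop (𝓝 l)) : HasSum (fun n => f n - f (n + 1)) (f 0 - l) := by
  rw [hasSum_iff_tendsto_nat_of_nonneg hf]
  simp_rw [Finset.sum_range_sub']
  exact tendsto_const_nhds.sub hl

/-- For any positive integer `k`:
`∑_{n=1}^∞ L_{k 3^n} / F_{k 3^{n+1}} = 1 / (F_{3k} Φ^{3k})`. -/
theorem statement6 (k : ℕ) (hk : 1 ≤ k) :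
    ∑' n : ℕ, (lucas (k * 3 ^ (n + 1)) : ℝ) / (Nat.fib (k * 3 ^ (n + 2)) : ℝ) =
      1 / ((Nat.fib (3 * k) : ℝ) * Phi ^ (3 * k)) := by
  set f : ℕ → ℝ := fun n => 1 / ((Nat.fib (k * 3 ^ (n + 1)) : ℝ) * φ ^ (k * 3 ^ (n + 1)))
  have hterm (n : ℕ) :
      (lucas (k * 3 ^ (n + 1)) : ℝ) / Nat.fib (k * 3 ^ (n + 2)) = f n - f (n + 1) := by
    have h3 : k * 3 ^ (n + 1 + 1) = 3 * (k * 3 ^ (n + 1)) := by ring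
    simp only [f, h3]
    exact lucas_div_fib_three_mul (m := k * 3 ^ (n + 1)) (Nat.mul_pos hk (by positivity)).ne'
  have hexp : Tendsto (fun n : ℕ => k * 3 ^ (n + 1)) atTop atTop :=
    tendsto_atTop_mono (fun n => (Nat.lt_pow_self (by norm_num)).le.trans
      (Nat.le_mul_of_pos_left _ hk)) (tendsto_add_atTop_nat 1)
  have hf : Tendsto f atTop (𝓝 0) := tendsto_one_div_fib_mul_goldenRatio_pow.comp hexp
  have hsum := hasSum_sub_succ_of_nonneg (fun n => hterm n ▸ by positivity) hf
  simp_rw [hterm]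
  rw [hsum.tsum_eq, sub_zero, show Phi = φ from rfl]
  simp [f, mul_comm k]
end

section
/- ∑_{n=1}^∞ (-1)^{F_n} · F_{F_{n+1}} / (F_{F_n} · F_{F_{n+2}}) = 1 − √5. -/
/-!
With `a = F_{n+1}`, `c = F_{n+2}` and `a + c = F_{n+3}`, d'Ocagne's identity
`F_{a+1} F_{a+c} - F_{a+c+1} F_a = (-1)^a F_c` turns the `n`-th term into
`r (F_{n+1}) - r (F_{n+3})`, where `r m = F_{m+1} / F_m`. The series therefore telescopes
with step two, and since `r m → φ` its sum is `r (F_1) + r (F_2) - 2φ = 2 - 2φ = 1 - √5`.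
The series converges absolutely: its `n`-th term is at most `1 / F_{F_{n+1}}`, and these form
(after the first) a subseries of `∑ 1 / F_m`, which converges by the ratio test.
-/

open Filter Finset Topology

open Nat (fib)

/-- d'Ocagne's identity, read off from the addition formula at the negative index `-a`. -/
theorem Nat.fib_add_one_mul_fib_add_sub_fib_add_add_one_mul_fib (a c : ℕ) :
    (fib (a + 1) * fib (a + c) - fib (a + c + 1) * fib a : ℤ) = (-1) ^ a * fib c := by
  have h := Int.fib_add (-(a : ℤ)) (a + c)
  rw [show -(a : ℤ) - 1 = -((a + 1 : ℕ) : ℤ) by push_cast; ring, neg_add_cancel_left,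
    Int.fib_neg_natCast, Int.fib_neg_natCast] at h
  simp only [← Nat.cast_add, ← Nat.cast_one (R := ℤ), Int.fib_natCast] at h
  push_cast at h
  have hsq : ((-1 : ℤ) ^ a) ^ 2 = 1 := by rw [← pow_mul, mul_comm, pow_mul]; simp
  linear_combination
    -(-1 : ℤ) ^ a * h - (fib (a + 1) * fib (a + c) - fib (a + c + 1) * fib a : ℤ) * hsq

theorem Nat.fib_succ_div_fib_sub_fib_succ_div_fib {a : ℕ} (ha : 0 < a) (c : ℕ) :
    (fib (a + 1) / fib a - fib (a + c + 1) / fib (a + c) : ℝ) =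
      (-1) ^ a * (fib c / (fib a * fib (a + c))) := by
  have hd : (fib (a + 1) * fib (a + c) - fib (a + c + 1) * fib a : ℝ) = (-1) ^ a * fib c := by
    exact_mod_cast Nat.fib_add_one_mul_fib_add_sub_fib_add_add_one_mul_fib a c
  have ha' : (fib a : ℝ) ≠ 0 := mod_cast (Nat.fib_pos.2 ha).ne'
  have hac : (fib (a + c) : ℝ) ≠ 0 := mod_cast (Nat.fib_pos.2 (by omega)).ne'
  field_simp
  linear_combination hd

theorem summable_inv_fib : Summable fun n => (fib n : ℝ)⁻¹ := by
  refine summable_of_ratio_test_tendsto_lt_one (l := -Real.goldenConj) ?_ ?_ ?_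
  · linarith [Real.neg_one_lt_goldenConj]
  · filter_upwards [eventually_gt_atTop 0] with n hn
    exact inv_ne_zero (mod_cast (Nat.fib_pos.2 hn).ne')
  · refine tendsto_fib_div_fib_succ_atTop.congr fun n => ?_
    simp only [norm_inv, RCLike.norm_natCast, inv_div_inv]

theorem Summable.hasSum_of_eq_sub_add_two {G : Type*} [AddCommGroup G] [TopologicalSpace G]
    [IsTopologicalAddGroup G] [T2Space G] {f g : ℕ → G} {L : G} (hf : Summable f)
    (hfg : ∀ n, f n = g n - g (n + 2)) (hg : Tendsto g atTop (𝓝 L)) :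
    HasSum f (g 0 + g 1 - (L + L)) := by
  have partial_sum : ∀ N, ∑ i ∈ range N, f i = g 0 + g 1 - (g N + g (N + 1)) := by
    intro N
    induction N with
    | zero => simp
    | succ N ih => rw [sum_range_succ, ih, hfg]; abel
  rw [hf.hasSum_iff_tendsto_nat, funext partial_sum]
  exact tendsto_const_nhds.sub (hg.add (hg.comp (tendsto_add_atTop_nat 1)))

theorem abs_fib_fib_div_le (n : ℕ) :
    |(-1 : ℝ) ^ fib (n + 1) * (fib (fib (n + 2)) / (fib (fib (n + 1)) * fib (fib (n + 3))))| ≤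
      (fib (fib (n + 1)) : ℝ)⁻¹ := by
  have hle : (fib (fib (n + 2)) : ℝ) ≤ fib (fib (n + 3)) :=
    mod_cast Nat.fib_mono (Nat.fib_mono (by omega))
  rw [abs_mul, abs_pow, abs_neg, abs_one, one_pow, one_mul, abs_of_nonneg (by positivity),
    mul_comm, ← div_div, div_eq_mul_inv]
  exact mul_le_of_le_one_left (by positivity) (div_le_one_of_le₀ hle (by positivity))

theorem fib_fib_div_eq_sub (n : ℕ) :
    (-1 : ℝ) ^ fib (n + 1) * (fib (fib (n + 2)) / (fib (fib (n + 1)) * fib (fib (n + 3)))) =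
      fib (fib (n + 1) + 1) / fib (fib (n + 1)) - fib (fib (n + 3) + 1) / fib (fib (n + 3)) := by
  rw [show fib (n + 3) = fib (n + 1) + fib (n + 2) from Nat.fib_add_two,
    Nat.fib_succ_div_fib_sub_fib_succ_div_fib (Nat.fib_pos.2 n.succ_pos)]

/-- `∑_{n=1}^∞ (-1)^{F_n} F_{F_{n+1}} / (F_{F_n} F_{F_{n+2}}) = 1 - √5`. -/
theorem statement8 :
    ∑' n : ℕ, (-1 : ℝ) ^ (Nat.fib (n + 1)) *
        ((Nat.fib (Nat.fib (n + 2)) : ℝ) /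
          ((Nat.fib (Nat.fib (n + 1)) : ℝ) * (Nat.fib (Nat.fib (n + 3)) : ℝ))) =
      1 - Real.sqrt 5 := by
  have summable : Summable fun n => (fib (fib (n + 1)) : ℝ)⁻¹ := by
    rw [← summable_nat_add_iff 1]
    exact summable_inv_fib.comp_injective Nat.fib_add_two_strictMono.injective
  have ratio_tendsto : Tendsto (fun n => (fib (fib (n + 1) + 1) / fib (fib (n + 1)) : ℝ))
      atTop (𝓝 Real.goldenRatio) :=
    tendsto_fib_succ_div_fib_atTop.comp
      (((tendsto_add_atTop_iff_nat 2).1 Nat.fib_add_two_strictMono.tendsto_atTop).comp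
        (tendsto_add_atTop_nat 1))
  refine ((summable.of_norm_bounded abs_fib_fib_div_le).hasSum_of_eq_sub_add_two
    fib_fib_div_eq_sub ratio_tendsto).tsum_eq.trans ?_
  norm_num [Real.goldenRatio]
  ring
end

section
/- ∑_{n=1}^∞ (-1)^{F_n} · F_{F_{n-1}} / (F_{F_n} · F_{F_{n+1}}) = (1 − √5)/2. -/
/-!
Write `φ, ψ = (1 ± √5) / 2`. Binet's formula gives `F (m + d) - ψ ^ d F m = φ ^ m F d`, and
since `φ ψ = -1` this is the telescoping identity
`ψ ^ m / F m - ψ ^ (m + d) / F (m + d) = (-1) ^ m F d / (F m F (m + d))`.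
With `m = F (n + 1)` and `d = F n`, so that `m + d = F (n + 2)`, the `n`-th term of the series is
`b n - b (n + 1)` for `b n = ψ ^ F (n + 1) / F (F (n + 1))`. As `|b n| ≤ |ψ| ^ n`, the series
converges absolutely and sums to `b 0 = ψ`.
-/

open Real goldenRatio

theorem tsum_sub_nat_succ {G : Type*} [AddCommGroup G] [TopologicalSpace G]
    [IsTopologicalAddGroup G] [T2Space G] {f : ℕ → G} (hf : Summable f) :
    ∑' n, (f n - f (n + 1)) = f 0 := by
  rw [hf.tsum_sub ((summable_nat_add_iff 1).mpr hf), hf.tsum_eq_zero_add, add_sub_cancel_right]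

theorem abs_goldenConj_lt_one : |ψ| < 1 :=
  abs_lt.mpr ⟨neg_one_lt_goldenConj, goldenConj_neg.trans one_pos⟩

theorem fib_add_sub_goldenConj_pow_mul_fib (m d : ℕ) :
    (Nat.fib (m + d) : ℝ) - ψ ^ d * Nat.fib m = φ ^ m * Nat.fib d := by
  rw [coe_fib_eq, coe_fib_eq, coe_fib_eq]
  ring

theorem goldenConj_pow_div_fib_sub (m d : ℕ) (hm : 0 < m) :
    ψ ^ m / Nat.fib m - ψ ^ (m + d) / Nat.fib (m + d) =
      (-1) ^ m * (Nat.fib d / (Nat.fib m * Nat.fib (m + d))) := by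
  have hFm : (Nat.fib m : ℝ) ≠ 0 := Nat.cast_ne_zero.mpr (Nat.fib_pos.mpr hm).ne'
  have hFmd : (Nat.fib (m + d) : ℝ) ≠ 0 :=
    Nat.cast_ne_zero.mpr (Nat.fib_pos.mpr (Nat.add_pos_left hm d)).ne'
  have hφψ : φ ^ m * ψ ^ m = (-1) ^ m := by rw [← mul_pow, goldenRatio_mul_goldenConj]
  rw [div_sub_div _ _ hFm hFmd, ← mul_div_assoc]
  congr 1
  linear_combination ψ ^ m * fib_add_sub_goldenConj_pow_mul_fib m d + Nat.fib d * hφψ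

theorem abs_goldenConj_pow_div_fib_le (k : ℕ) : |ψ ^ k / Nat.fib k| ≤ |ψ| ^ k := by
  rcases eq_or_ne k 0 with rfl | hk
  · simp
  rw [abs_div, abs_pow, Nat.abs_cast]
  exact div_le_self (by positivity) (mod_cast Nat.fib_pos.mpr (Nat.pos_of_ne_zero hk))

theorem summable_goldenConj_pow_div_fib_comp {m : ℕ → ℕ} (hm : ∀ n, n ≤ m n) :
    Summable fun n ↦ ψ ^ m n / Nat.fib (m n) := by
  refine (summable_geometric_of_lt_one (abs_nonneg ψ) abs_goldenConj_lt_one).of_norm_bounded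
    fun n ↦ ?_
  exact (abs_goldenConj_pow_div_fib_le (m n)).trans
    (pow_le_pow_of_le_one (abs_nonneg ψ) abs_goldenConj_lt_one.le (hm n))

/-- `∑_{n=1}^∞ (-1)^{F_n} F_{F_{n-1}} / (F_{F_n} F_{F_{n+1}}) = (1 - √5)/2`. -/
theorem statement9 :
    ∑' n : ℕ, (-1 : ℝ) ^ (Nat.fib (n + 1)) *
        ((Nat.fib (Nat.fib n) : ℝ) /
          ((Nat.fib (Nat.fib (n + 1)) : ℝ) * (Nat.fib (Nat.fib (n + 2)) : ℝ))) =
      (1 - Real.sqrt 5) / 2 := by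
  set b : ℕ → ℝ := fun n ↦ ψ ^ Nat.fib (n + 1) / Nat.fib (Nat.fib (n + 1))
  have hterm (n : ℕ) : (-1 : ℝ) ^ Nat.fib (n + 1) *
      (Nat.fib (Nat.fib n) / (Nat.fib (Nat.fib (n + 1)) * Nat.fib (Nat.fib (n + 2)))) =
        b n - b (n + 1) := by
    have h := goldenConj_pow_div_fib_sub _ (Nat.fib n) (Nat.fib_pos.mpr n.succ_pos)
    rw [add_comm (Nat.fib (n + 1)), ← Nat.fib_add_two] at h
    exact h.symm
  have hb : Summable b :=
    summable_goldenConj_pow_div_fib_comp fun n ↦ by simpa using Nat.le_fib_add_one (n + 1)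
  simp_rw [hterm, tsum_sub_nat_succ hb, b, zero_add, Nat.fib_one, pow_one, Nat.cast_one, div_one]
end

section
/- For positive integers r and k, define S_{r,k} := ∑_{n=1}^∞ (-1)^{(r-1)(n-1)} / (F_{rn} · F_{r(n+k)}). Then for any positive integer r and any odd positive integer k: S_{r,k} = (F_r / F_{rk}) · ( S_{r,1} + (-1)^r · ∑_{n=1}^{(k-1)/2} 1 / (F_{2nr} · F_{(2n+1)r}) ). -/
open Filter Finset Topology

/-- `S r k = ∑_{n=1}^∞ (-1)^{(r-1)(n-1)} / (F_{rn} F_{r(n+k)})`. -/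
noncomputable def S (r k : ℕ) : ℝ :=
  ∑' n : ℕ, (-1 : ℝ) ^ ((r - 1) * n) /
    ((Nat.fib (r * (n + 1)) : ℝ) * (Nat.fib (r * (n + 1 + k)) : ℝ))

/-!
Let `t_{k,n}` be the `n`-th term of `S_{r,k}`, counted from `0`, and let
`c_n = (-1)^n F_{r(n+1)+1} / F_{r(n+1)}`. D'Ocagne's identity
`F_{a+b} F_{a+1} - F_{a+b+1} F_a = (-1)^a F_b` gives
`F_{rk} t_{k,n} = (-1)^r (c_n - (-1)^k c_{n+k})`. Telescoping the case `k = 1` with alternating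
signs turns this into `F_{rk} t_{k,n} = F_r ∑_{i<k} (-1)^i t_{1,n+i}`, so summing over `n` writes
`F_{rk} S_{r,k}` as `F_r` times an alternating sum of tails of `S_{r,1}`. For odd `k` that
alternating sum is `S_{r,1}` minus the terms `t_{1,n}` with `n < k` odd, which make up the finite
sum in the theorem.
-/

theorem Nat.cast_fib_add_mul_fib_succ_sub {R : Type*} [CommRing R] (a b : ℕ) :
    (fib (a + b) : R) * fib (a + 1) - fib (a + b + 1) * fib a = (-1) ^ a * fib b := by
  induction a with
  | zero => simp
  | succ a ih =>
    rw [show a + 1 + b = a + b + 1 by ring, fib_add_two, show a + b + 1 + 1 = a + b + 2 by ring,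
      fib_add_two, pow_succ]
    push_cast
    linear_combination -ih

theorem Nat.cast_add_one_le_two_mul_fib_succ (n : ℕ) : (n + 1 : ℝ) ≤ 2 * fib (n + 1) := by
  have h₁ : n + 1 ≤ fib (n + 1) + 1 := le_fib_add_one (n + 1)
  have h₂ : 1 ≤ fib (n + 1) := fib_pos.mpr n.succ_pos
  exact_mod_cast (by omega : n + 1 ≤ 2 * fib (n + 1))

noncomputable def fibRatio (a : ℕ) : ℝ := Nat.fib (a + 1) / Nat.fib a

theorem fibRatio_sub_fibRatio_add {a : ℕ} (ha : a ≠ 0) (b : ℕ) :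
    fibRatio a - fibRatio (a + b) = (-1) ^ a * Nat.fib b / (Nat.fib a * Nat.fib (a + b)) := by
  have h₁ : (Nat.fib a : ℝ) ≠ 0 := by simpa using ha
  have h₂ : (Nat.fib (a + b) : ℝ) ≠ 0 := by simp [ha]
  rw [fibRatio, fibRatio, div_sub_div _ _ h₁ h₂, ← Nat.cast_fib_add_mul_fib_succ_sub]
  ring

theorem sum_range_neg_one_pow_mul_add_succ {R : Type*} [CommRing R] (f : ℕ → R) (k : ℕ) :
    ∑ i ∈ range k, (-1) ^ i * (f i + f (i + 1)) = f 0 - (-1) ^ k * f k := by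
  induction k with
  | zero => simp
  | succ k ih =>
    rw [sum_range_succ, ih, pow_succ]
    ring

noncomputable def sTerm (r k n : ℕ) : ℝ :=
  (-1 : ℝ) ^ ((r - 1) * n) / ((Nat.fib (r * (n + 1)) : ℝ) * (Nat.fib (r * (n + 1 + k)) : ℝ))

theorem S_eq_tsum_sTerm (r k : ℕ) : S r k = ∑' n, sTerm r k n := rfl

theorem summable_sTerm {r : ℕ} (hr : 0 < r) (k : ℕ) : Summable (sTerm r k) := by
  have hg : Summable (fun n : ℕ => 4 * (1 / ((n + 1 : ℕ) : ℝ) ^ 2)) :=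
    ((summable_nat_add_iff 1).mpr (Real.summable_one_div_nat_pow.mpr one_lt_two)).mul_left 4
  refine hg.of_norm_bounded fun n => ?_
  have hA : (n + 1 : ℝ) ≤ 2 * Nat.fib (r * (n + 1)) :=
    (Nat.cast_add_one_le_two_mul_fib_succ n).trans (by gcongr; exact Nat.le_mul_of_pos_left _ hr)
  have hB : (n + 1 : ℝ) ≤ 2 * Nat.fib (r * (n + 1 + k)) :=
    (Nat.cast_add_one_le_two_mul_fib_succ n).trans
      (by gcongr; exact (Nat.le_mul_of_pos_left _ hr).trans (Nat.mul_le_mul_left _ (by omega)))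
  rw [sTerm, norm_div, norm_pow, norm_neg, norm_one, one_pow, Real.norm_eq_abs, abs_of_nonneg
    (by positivity), div_le_iff₀ (by nlinarith), Nat.cast_add_one]
  field_simp
  nlinarith

theorem neg_one_pow_sub_one_mul_mul_neg_one_pow {r : ℕ} (hr : 0 < r) (n : ℕ) :
    (-1 : ℝ) ^ ((r - 1) * n) * (-1) ^ (r * (n + 1)) = (-1) ^ r * (-1) ^ n := by
  obtain ⟨s, rfl⟩ := Nat.exists_eq_add_one_of_ne_zero hr.ne'
  rw [← pow_add, ← pow_add,
    show (s + 1 - 1) * n + (s + 1) * (n + 1) = 2 * (s * n) + (s + 1 + n) by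
      rw [Nat.add_sub_cancel]; ring,
    pow_add, pow_mul]
  simp

noncomputable def signedFibRatio (r n : ℕ) : ℝ := (-1) ^ n * fibRatio (r * (n + 1))

theorem fib_mul_sTerm {r : ℕ} (hr : 0 < r) (k n : ℕ) :
    Nat.fib (r * k) * sTerm r k n
      = (-1) ^ r * (signedFibRatio r n - (-1) ^ k * signedFibRatio r (n + k)) := by
  have hd := fibRatio_sub_fibRatio_add (a := r * (n + 1)) (by positivity) (r * k)
  rw [show r * (n + 1) + r * k = r * (n + 1 + k) by ring] at hd
  have hsign := neg_one_pow_sub_one_mul_mul_neg_one_pow hr n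
  have hk : (-1 : ℝ) ^ k * (-1) ^ (n + k) = (-1) ^ n := by
    rw [pow_add, mul_left_comm, ← mul_pow]; norm_num
  have hsq : ((-1 : ℝ) ^ (r * (n + 1))) ^ 2 = 1 := by
    rw [← pow_mul, mul_comm, pow_mul]; norm_num
  rw [signedFibRatio, signedFibRatio, show n + k + 1 = n + 1 + k by ring,
    ← mul_assoc _ ((-1) ^ (n + k)), hk, ← mul_sub, ← mul_assoc, ← hsign, hd, sTerm]
  linear_combination -(Nat.fib (r * k) * (-1) ^ ((r - 1) * n)
    / (Nat.fib (r * (n + 1)) * Nat.fib (r * (n + 1 + k)) : ℝ)) * hsq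

theorem fib_mul_sTerm_eq_sum {r : ℕ} (hr : 0 < r) (k n : ℕ) :
    Nat.fib (r * k) * sTerm r k n
      = Nat.fib r * ∑ i ∈ range k, (-1) ^ i * sTerm r 1 (n + i) := by
  have h := sum_range_neg_one_pow_mul_add_succ (fun i => signedFibRatio r (n + i)) k
  rw [add_zero] at h
  rw [fib_mul_sTerm hr k n, ← h, mul_sum, mul_sum]
  refine sum_congr rfl fun i _ => ?_
  have h₁ := fib_mul_sTerm hr 1 (n + i)
  rw [mul_one] at h₁
  rw [mul_left_comm (Nat.fib r : ℝ), h₁, ← add_assoc]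
  ring

theorem fib_mul_S {r : ℕ} (hr : 0 < r) (k : ℕ) :
    Nat.fib (r * k) * S r k
      = Nat.fib r * ∑ i ∈ range k, (-1) ^ i * (S r 1 - ∑ n ∈ range i, sTerm r 1 n) := by
  have htail : ∀ i, ∑' n, sTerm r 1 (n + i) = S r 1 - ∑ n ∈ range i, sTerm r 1 n := fun i =>
    eq_sub_of_add_eq' ((summable_sTerm hr 1).sum_add_tsum_nat_add i)
  have hsummable : ∀ i ∈ range k, Summable fun n => (-1 : ℝ) ^ i * sTerm r 1 (n + i) :=
    fun i _ => ((summable_nat_add_iff i).mpr (summable_sTerm hr 1)).mul_left _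
  calc (Nat.fib (r * k) : ℝ) * S r k
      = ∑' n, Nat.fib r * ∑ i ∈ range k, (-1) ^ i * sTerm r 1 (n + i) := by
        rw [S_eq_tsum_sTerm, ← tsum_mul_left]
        simp_rw [fib_mul_sTerm_eq_sum hr]
    _ = Nat.fib r * ∑ i ∈ range k, (-1) ^ i * ∑' n, sTerm r 1 (n + i) := by
        rw [tsum_mul_left, Summable.tsum_finsetSum hsummable]
        simp_rw [tsum_mul_left]
    _ = _ := by simp_rw [htail]

theorem sum_range_two_mul_add_one_neg_one_pow_mul_sub {R : Type*} [CommRing R] (a : ℕ → R)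
    (s : R) (j : ℕ) :
    ∑ i ∈ range (2 * j + 1), (-1) ^ i * (s - ∑ n ∈ range i, a n)
      = s - ∑ m ∈ range j, a (2 * m + 1) := by
  induction j with
  | zero => simp
  | succ j ih =>
    have hodd : (-1 : R) ^ (2 * j + 1) = -1 := Odd.neg_one_pow ⟨j, rfl⟩
    have heven : (-1 : R) ^ (2 * j + 1 + 1) = 1 := Even.neg_one_pow ⟨j + 1, by ring⟩
    rw [show 2 * (j + 1) + 1 = 2 * j + 1 + 1 + 1 by ring, sum_range_succ, sum_range_succ, ih, hodd,
      heven, sum_range_succ a (2 * j + 1), sum_range_succ (fun m => a (2 * m + 1))]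
    ring

theorem sTerm_one_two_mul_add_one {r : ℕ} (hr : 0 < r) (m : ℕ) :
    sTerm r 1 (2 * m + 1)
      = -(-1) ^ r * (1 / (Nat.fib (2 * (m + 1) * r) * Nat.fib ((2 * (m + 1) + 1) * r))) := by
  have hsign : (-1 : ℝ) ^ ((r - 1) * (2 * m + 1)) = -(-1) ^ r := by
    obtain ⟨s, rfl⟩ := Nat.exists_eq_add_one_of_ne_zero hr.ne'
    rw [show (s + 1 - 1) * (2 * m + 1) = s + 2 * (s * m) by rw [Nat.add_sub_cancel]; ring,
      pow_add, pow_mul, neg_one_sq, one_pow, pow_succ]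
    ring
  rw [sTerm, hsign, show r * (2 * m + 1 + 1) = 2 * (m + 1) * r by ring,
    show r * (2 * m + 1 + 1 + 1) = (2 * (m + 1) + 1) * r by ring]
  ring

theorem statement14_general (r k : ℕ) (hr : 1 ≤ r) (hkodd : Odd k) :
    S r k = ((Nat.fib r : ℝ) / (Nat.fib (r * k) : ℝ)) *
      (S r 1 + (-1 : ℝ) ^ r *
        ∑ n ∈ Finset.range ((k - 1) / 2),
          1 / ((Nat.fib (2 * (n + 1) * r) : ℝ) * (Nat.fib ((2 * (n + 1) + 1) * r) : ℝ))) := by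
  obtain ⟨j, rfl⟩ := hkodd
  have hfib : (Nat.fib (r * (2 * j + 1)) : ℝ) ≠ 0 :=
    Nat.cast_ne_zero.mpr (Nat.fib_pos.mpr (by positivity)).ne'
  have h := fib_mul_S hr (2 * j + 1)
  simp_rw [sum_range_two_mul_add_one_neg_one_pow_mul_sub, sTerm_one_two_mul_add_one hr,
    ← mul_sum] at h
  rw [show (2 * j + 1 - 1) / 2 = j by omega, div_mul_eq_mul_div, eq_div_iff hfib]
  linear_combination h

/-- For any positive integer `r` and any odd positive integer `k`:
`S_{r,k} = (F_r / F_{rk}) (S_{r,1} + (-1)^r ∑_{n=1}^{(k-1)/2} 1/(F_{2nr} F_{(2n+1)r}))`. -/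
theorem statement14 (r k : ℕ) (hr : 1 ≤ r) (hk : 1 ≤ k) (hkodd : Odd k) :
    S r k = ((Nat.fib r : ℝ) / (Nat.fib (r * k) : ℝ)) *
      (S r 1 + (-1 : ℝ) ^ r *
        ∑ n ∈ Finset.range ((k - 1) / 2),
          1 / ((Nat.fib (2 * (n + 1) * r) : ℝ) * (Nat.fib ((2 * (n + 1) + 1) * r) : ℝ))) :=
  statement14_general r k hr hkodd
end

section
/- Let (u_n)_{n≥1} be an increasing sequence of positive integers. Then ∑_{n=1}^∞ (-1)^{u_n − n} / (F_{u_n} · Φ^{u_n}) = ∑_{n=1}^∞ (-1)^{u_{2n-1}+1} · F_{u_{2n} − u_{2n-1}} / (F_{u_{2n}} · F_{u_{2n-1}}). -/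
lemma neg_one_zpow_sub {R : Type*} [DivisionRing R] (a b : ℤ) :
    (-1 : R) ^ (a - b) = (-1) ^ a * (-1) ^ b := by
  rw [sub_eq_add_neg, zpow_add₀ (by norm_num), zpow_neg, ← inv_zpow, inv_neg_one]

/-- d'Ocagne's identity, read off from `Int.fib_add` at the negative index `-a`. -/
theorem Nat.fib_mul_fib_succ_sub_fib_succ_mul_fib {a b : ℕ} (hab : a ≤ b) :
    (fib a * fib (b + 1) - fib (a + 1) * fib b : ℤ) = (-1) ^ (a + 1) * fib (b - a) := by
  have h := Int.fib_add (-a) b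
  rw [show -(a : ℤ) - 1 = -((a + 1 : ℕ) : ℤ) by push_cast; ring, Int.fib_neg_natCast,
    Int.fib_neg_natCast, neg_add_eq_sub, ← Nat.cast_sub hab, ← Nat.cast_add_one] at h
  simp only [Int.fib_natCast] at h
  have hsq : ((-1 : ℤ) ^ a) ^ 2 = 1 := by rw [← pow_mul, pow_mul', neg_one_sq, one_pow]
  rw [h]
  linear_combination (-(fib a * fib (b + 1) - fib (a + 1) * fib b : ℤ)) * hsq

namespace Real

open goldenRatio

theorem neg_one_pow_div_fib_mul_goldenRatio_pow {n : ℕ} (hn : n ≠ 0) :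
    (-1 : ℝ) ^ n / (Nat.fib n * φ ^ n) = Nat.fib (n + 1) / Nat.fib n - φ := by
  have hfib : (Nat.fib n : ℝ) ≠ 0 := by exact_mod_cast (Nat.fib_pos.2 (by omega)).ne'
  have hψ : (-1 : ℝ) ^ n / φ ^ n = ψ ^ n := by
    rw [div_eq_iff (pow_ne_zero _ goldenRatio_ne_zero), ← mul_pow, goldenConj_mul_goldenRatio]
  rw [div_mul_eq_div_div_swap, hψ, ← fib_succ_sub_goldenRatio_mul_fib]
  field_simp

theorem fib_succ_div_fib_sub_fib_succ_div_fib {a b : ℕ} (ha : a ≠ 0) (hab : a ≤ b) :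
    (Nat.fib (b + 1) / Nat.fib b - Nat.fib (a + 1) / Nat.fib a : ℝ) =
      (-1) ^ (a + 1) * (Nat.fib (b - a) / (Nat.fib b * Nat.fib a)) := by
  have hfa : (Nat.fib a : ℝ) ≠ 0 := by exact_mod_cast (Nat.fib_pos.2 (by omega)).ne'
  have hfb : (Nat.fib b : ℝ) ≠ 0 := by exact_mod_cast (Nat.fib_pos.2 (by omega)).ne'
  have h : (Nat.fib a * Nat.fib (b + 1) - Nat.fib (a + 1) * Nat.fib b : ℝ) =
      (-1) ^ (a + 1) * Nat.fib (b - a) := by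
    exact_mod_cast Nat.fib_mul_fib_succ_sub_fib_succ_mul_fib hab
  field_simp
  linear_combination h

theorem summable_neg_one_zpow_div_fib_mul_goldenRatio_pow {v : ℕ → ℕ} (hv : v.Injective)
    (s : ℕ → ℤ) : Summable fun n ↦ (-1 : ℝ) ^ s n / (Nat.fib (v n) * φ ^ v n) := by
  have hgeom : Summable fun n ↦ (φ⁻¹) ^ v n :=
    (summable_geometric_of_lt_one (inv_nonneg.2 goldenRatio_pos.le)
      (inv_lt_one_of_one_lt₀ one_lt_goldenRatio)).comp_injective hv
  refine hgeom.of_norm_bounded fun n ↦ ?_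
  rw [norm_div, norm_zpow, norm_neg, norm_one, one_zpow, one_div, norm_mul, mul_inv, inv_pow,
    norm_natCast, norm_of_nonneg (pow_nonneg goldenRatio_pos.le _)]
  exact mul_le_of_le_one_left (by positivity) (Nat.cast_inv_le_one _)

end Real

/-- Let `(u_n)_{n≥1}` be an increasing sequence of positive integers.
Then `∑_{n=1}^∞ (-1)^{u_n - n} / (F_{u_n} Φ^{u_n})
= ∑_{n=1}^∞ (-1)^{u_{2n-1}+1} F_{u_{2n} - u_{2n-1}} / (F_{u_{2n}} F_{u_{2n-1}})`. -/
theorem statement15 (u : ℕ → ℕ) (hupos : ∀ n, 1 ≤ n → 1 ≤ u n)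
    (humono : ∀ n, 1 ≤ n → u n < u (n + 1)) :
    ∑' n : ℕ, (-1 : ℝ) ^ ((u (n + 1) : ℤ) - ((n : ℤ) + 1)) /
        ((Nat.fib (u (n + 1)) : ℝ) * Phi ^ (u (n + 1))) =
      ∑' n : ℕ, (-1 : ℝ) ^ (u (2 * n + 1) + 1) *
        ((Nat.fib (u (2 * n + 2) - u (2 * n + 1)) : ℝ) /
          ((Nat.fib (u (2 * n + 2)) : ℝ) * (Nat.fib (u (2 * n + 1)) : ℝ))) := by
  have hu : StrictMono fun n ↦ u (n + 1) :=
    strictMono_nat_of_lt_succ fun n ↦ humono (n + 1) n.succ_pos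
  rw [show Phi = Real.goldenRatio from rfl]
  set f : ℕ → ℝ := fun n ↦ (-1 : ℝ) ^ ((u (n + 1) : ℤ) - ((n : ℤ) + 1)) /
      ((Nat.fib (u (n + 1)) : ℝ) * Real.goldenRatio ^ (u (n + 1))) with hf
  have hsum : Summable f := Real.summable_neg_one_zpow_div_fib_mul_goldenRatio_pow hu.injective _
  have hev : Summable fun n ↦ f (2 * n) := hsum.comp_injective (mul_right_injective₀ two_ne_zero)
  have hodd : Summable fun n ↦ f (2 * n + 1) :=
    hsum.comp_injective ((add_left_injective 1).comp (mul_right_injective₀ two_ne_zero))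
  rw [← tsum_even_add_odd hev hodd, ← hev.tsum_add hodd]
  refine tsum_congr fun n ↦ ?_
  have ha : u (2 * n + 1) ≠ 0 := Nat.one_le_iff_ne_zero.1 (hupos _ (by omega))
  have hab : u (2 * n + 1) ≤ u (2 * n + 2) := (humono _ (by omega)).le
  simp only [hf, neg_one_zpow_sub, zpow_natCast, show 2 * n + 1 + 1 = 2 * n + 2 from rfl]
  rw [Odd.neg_one_zpow ⟨n, by push_cast; ring⟩, Even.neg_one_zpow ⟨n + 1, by push_cast; ring⟩,
    mul_neg_one, mul_one, neg_div, Real.neg_one_pow_div_fib_mul_goldenRatio_pow ha,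
    Real.neg_one_pow_div_fib_mul_goldenRatio_pow (by omega),
    ← Real.fib_succ_div_fib_sub_fib_succ_div_fib ha hab]
  ring
end

section
/- Let (u_n)_{n≥1} be an increasing sequence of positive integers such that u_n ≡ n (mod 2) for every n ≥ 1. Then ∑_{n=1}^∞ 1 / (F_{u_n} · Φ^{u_n}) = ∑_{n=1}^∞ F_{u_{2n} − u_{2n-1}} / (F_{u_{2n}} · F_{u_{2n-1}}). -/
open Filter Finset Topology

/-!
For `a < b` with `b - a` odd, Binet's formula gives the splitting
`F_{b-a} / (F_b F_a) = 1 / (F_a Φ^a) + 1 / (F_b Φ^b)`, because `(Φ ψ)^{b-a} = -1`.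
The parity condition makes every pair `(u_{2n-1}, u_{2n})` of this kind, so the right-hand
series is the left-hand one with consecutive terms grouped in pairs; the left-hand series
converges absolutely since `1 / (F_m Φ^m) ≤ Φ^{-m}` and `u` is injective.
-/

open Real

lemma fib_mul_goldenRatio_pow_of_odd (n : ℕ) {d : ℕ} (hd : Odd d) :
    (Nat.fib d : ℝ) * goldenRatio ^ (2 * n + d) =
      Nat.fib (n + d) * goldenRatio ^ (n + d) + Nat.fib n * goldenRatio ^ n := by
  have hconj : goldenRatio ^ d * goldenConj ^ d = -1 := by
    rw [← mul_pow, goldenRatio_mul_goldenConj, hd.neg_one_pow]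
  rw [coe_fib_eq, coe_fib_eq, coe_fib_eq]
  linear_combination
    ((goldenRatio ^ n * goldenConj ^ n - goldenRatio ^ n * goldenRatio ^ n) / √5) * hconj

lemma fib_sub_div_fib_mul_fib_of_odd {a b : ℕ} (ha : 0 < a) (hab : a ≤ b)
    (hodd : Odd (b - a)) :
    (Nat.fib (b - a) : ℝ) / (Nat.fib b * Nat.fib a) =
      1 / (Nat.fib a * goldenRatio ^ a) + 1 / (Nat.fib b * goldenRatio ^ b) := by
  obtain ⟨d, rfl⟩ := Nat.exists_eq_add_of_le hab
  rw [Nat.add_sub_cancel_left] at hodd ⊢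
  have hfa : (0 : ℝ) < Nat.fib a := by exact_mod_cast Nat.fib_pos.2 ha
  have hfb : (0 : ℝ) < Nat.fib (a + d) := by exact_mod_cast Nat.fib_pos.2 (by omega)
  have hφ := goldenRatio_pos
  rw [div_add_div _ _ (by positivity) (by positivity),
    div_eq_div_iff (by positivity) (by positivity)]
  linear_combination (Nat.fib a * Nat.fib (a + d) : ℝ) * fib_mul_goldenRatio_pow_of_odd a hodd

lemma one_div_fib_mul_goldenRatio_pow_le (n : ℕ) :
    1 / (Nat.fib n * goldenRatio ^ n) ≤ goldenRatio⁻¹ ^ n := by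
  rcases Nat.eq_zero_or_pos n with rfl | hn
  · simp
  have hfib : (1 : ℝ) ≤ Nat.fib n := by exact_mod_cast Nat.fib_pos.2 hn
  rw [inv_pow, ← one_div]
  exact one_div_le_one_div_of_le (by positivity) (le_mul_of_one_le_left (by positivity) hfib)

lemma summable_one_div_fib_mul_goldenRatio_pow :
    Summable fun n : ℕ => 1 / (Nat.fib n * goldenRatio ^ n) :=
  Summable.of_nonneg_of_le (fun _ => by positivity) one_div_fib_mul_goldenRatio_pow_le
    (summable_geometric_of_lt_one (by positivity) (inv_lt_one_of_one_lt₀ one_lt_goldenRatio))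

lemma Summable.tsum_two_mul_add_two_mul_add_one {f : ℕ → ℝ} (hf : Summable f) :
    ∑' n, (f (2 * n) + f (2 * n + 1)) = ∑' n, f n := by
  have heven : Summable fun n => f (2 * n) := hf.comp_injective fun x y h => by omega
  have hodd : Summable fun n => f (2 * n + 1) := hf.comp_injective fun x y h => by omega
  rw [heven.tsum_add hodd, tsum_even_add_odd heven hodd]

theorem statement16_general (u : ℕ → ℕ)
    (humono : ∀ n, 1 ≤ n → u n < u (n + 1))
    (hparity : ∀ n, 1 ≤ n → u n ≡ n [MOD 2]) :
    ∑' n : ℕ, 1 / ((Nat.fib (u (n + 1)) : ℝ) * Phi ^ (u (n + 1))) =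
      ∑' n : ℕ, (Nat.fib (u (2 * n + 2) - u (2 * n + 1)) : ℝ) /
        ((Nat.fib (u (2 * n + 2)) : ℝ) * (Nat.fib (u (2 * n + 1)) : ℝ)) := by
  change ∑' n : ℕ, 1 / ((Nat.fib (u (n + 1)) : ℝ) * goldenRatio ^ (u (n + 1))) = _
  have hmono : StrictMono fun n => u (n + 1) :=
    strictMono_nat_of_lt_succ fun n => humono (n + 1) (by omega)
  have hsum : Summable fun n => 1 / ((Nat.fib (u (n + 1)) : ℝ) * goldenRatio ^ (u (n + 1))) :=
    summable_one_div_fib_mul_goldenRatio_pow.comp_injective hmono.injective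
  rw [← hsum.tsum_two_mul_add_two_mul_add_one]
  refine tsum_congr fun n => ?_
  have hodd := hparity (2 * n + 1) (by omega)
  have heven := hparity (2 * n + 2) (by omega)
  have hlt : u (2 * n + 1) < u (2 * n + 2) := humono (2 * n + 1) (by omega)
  unfold Nat.ModEq at hodd heven
  exact (fib_sub_div_fib_mul_fib_of_odd (by omega) hlt.le (Nat.odd_iff.2 (by omega))).symm

/-- Let `(u_n)_{n≥1}` be an increasing sequence of positive integers
with `u_n ≡ n (mod 2)` for all `n ≥ 1`. Then
`∑_{n=1}^∞ 1 / (F_{u_n} Φ^{u_n})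
= ∑_{n=1}^∞ F_{u_{2n} - u_{2n-1}} / (F_{u_{2n}} F_{u_{2n-1}})`. -/
theorem statement16 (u : ℕ → ℕ) (hupos : ∀ n, 1 ≤ n → 1 ≤ u n)
    (humono : ∀ n, 1 ≤ n → u n < u (n + 1))
    (hparity : ∀ n, 1 ≤ n → u n ≡ n [MOD 2]) :
    ∑' n : ℕ, 1 / ((Nat.fib (u (n + 1)) : ℝ) * Phi ^ (u (n + 1))) =
      ∑' n : ℕ, (Nat.fib (u (2 * n + 2) - u (2 * n + 1)) : ℝ) /
        ((Nat.fib (u (2 * n + 2)) : ℝ) * (Nat.fib (u (2 * n + 1)) : ℝ)) :=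
  statement16_general u humono hparity
end
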